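/- arXiv:1210.5756 — 9 statements merged into one kernel-verified Lean document; each statement's English description precedes it below -/
import Mathlib

section
/- The quantity 2π / arccos(1/3) is not a natural number (i.e., there is no positive integer m with m · arccos(1/3) = 2π). -/
/-! The angle `α = arccos (1/3)` lies strictly between `π / 3 = arccos (1/2)` and
`2π / 5 = arccos ((√5 - 1) / 4)`, so `5α < 2π < 6α` and `2π` is no integer multiple of `α`. -/

open Real

theorem not_exists_nat_mul_eq_of_lt_of_lt {K : Type*} [Field K] [LinearOrder K]
    [IsStrictOrderedRing K] {x y : K} (n : ℕ) (hlo : n * x < y) (hhi : y < (n + 1) * x) :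
    ¬∃ m : ℕ, m * x = y := by
  rintro ⟨m, rfl⟩
  have hx : 0 < x := by linarith
  have hnm : n < m := by exact_mod_cast lt_of_mul_lt_mul_right hlo hx.le
  have hmn : m < n + 1 := by exact_mod_cast lt_of_mul_lt_mul_right hhi hx.le
  omega

theorem pi_div_three_lt_arccos_one_third : π / 3 < arccos (1 / 3) := by
  calc π / 3 = arccos (1 / 2) := by
        rw [← cos_pi_div_three, arccos_cos (by positivity) (by linarith [pi_pos])]
    _ < arccos (1 / 3) := arccos_lt_arccos (by norm_num) (by norm_num) (by norm_num)

theorem cos_two_mul_pi_div_five : cos (2 * π / 5) = (√5 - 1) / 4 := by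
  rw [mul_div_assoc, cos_two_mul, cos_pi_div_five]
  nlinarith [sq_sqrt (show (0 : ℝ) ≤ 5 by norm_num)]

theorem arccos_one_third_lt_two_mul_pi_div_five : arccos (1 / 3) < 2 * π / 5 := by
  have hsqrt : √5 < 7 / 3 := by
    rw [sqrt_lt' (by norm_num)]
    norm_num
  calc arccos (1 / 3) < arccos ((√5 - 1) / 4) :=
        arccos_lt_arccos (by linarith [sqrt_nonneg 5]) (by linarith) (by norm_num)
    _ = 2 * π / 5 := by
        rw [← cos_two_mul_pi_div_five, arccos_cos (by positivity) (by linarith [pi_pos])]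

theorem stmt_0 : ¬ ∃ m : ℕ, 0 < m ∧ (m : ℝ) * Real.arccos (1/3) = 2 * Real.pi := by
  rintro ⟨m, -, hm⟩
  refine not_exists_nat_mul_eq_of_lt_of_lt 5 ?_ ?_ ⟨m, hm⟩
  · linarith [arccos_one_third_lt_two_mul_pi_div_five]
  · linarith [pi_div_three_lt_arccos_one_third]
end

section
/- If α = 2π − 3·arccos(1/3) and a = arccos((1 + 3·cos α)/4), then β := 2·arccos((1 − cos a)/(√3·sin a)) does not belong to the set {2π − k·arccos(1/3) : k ∈ {1,2,3,4}}. -/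
theorem stmt_3 (α a β : ℝ)
    (hα : α = 2 * Real.pi - 3 * Real.arccos (1/3))
    (ha : a = Real.arccos ((1 + 3 * Real.cos α) / 4))
    (hβ : β = 2 * Real.arccos ((1 - Real.cos a) / (Real.sqrt 3 * Real.sin a))) :
    β ∉ {x : ℝ | ∃ k ∈ ({1, 2, 3, 4} : Set ℕ), x = 2 * Real.pi - k * Real.arccos (1/3)} := by
  set θ := Real.arccos (1/3) with hθ
  have hcosθ : Real.cos θ = 1/3 := Real.cos_arccos (by norm_num) (by norm_num)
  have hθ0 : 0 < θ := Real.arccos_pos.2 (by norm_num)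
  have hθhalf : θ ≤ Real.pi / 2 := Real.arccos_le_pi_div_two.2 (by norm_num)
  -- cos α = -23/27
  have hcosα : Real.cos α = -23/27 := by
    rw [hα, Real.cos_two_pi_sub, Real.cos_three_mul, hcosθ]; norm_num
  -- a = arccos (-7/18)
  have ha' : a = Real.arccos (-7/18) := by rw [ha, hcosα]; norm_num
  have hcosa : Real.cos a = -7/18 := by
    rw [ha']; exact Real.cos_arccos (by norm_num) (by norm_num)
  have hsina : Real.sin a = Real.sqrt (275/324) := by
    rw [ha', Real.sin_arccos]; norm_num
  -- the quantity s = √3 * sin a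
  have hs : Real.sqrt 3 * Real.sin a = Real.sqrt (825/324) := by
    rw [hsina, ← Real.sqrt_mul (by norm_num : (0:ℝ) ≤ 3)]; norm_num
  have hs1 : Real.sqrt (825/324) < 25/14 := by
    rw [show (25:ℝ)/14 = Real.sqrt ((25/14)^2) by
      rw [Real.sqrt_sq (by norm_num)]]
    exact Real.sqrt_lt_sqrt (by norm_num) (by norm_num)
  have hs2 : (25:ℝ)/18 ≤ Real.sqrt (825/324) := by
    rw [show (25:ℝ)/18 = Real.sqrt ((25/18)^2) by
      rw [Real.sqrt_sq (by norm_num)]]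
    exact Real.sqrt_le_sqrt (by norm_num)
  have hs0 : (0:ℝ) < Real.sqrt (825/324) := lt_of_lt_of_le (by norm_num) hs2
  set c := (1 - Real.cos a) / (Real.sqrt 3 * Real.sin a) with hc
  have hc' : c = (25/18) / Real.sqrt (825/324) := by
    rw [hc, hcosa, hs]; norm_num
  have hc1 : c ≤ 1 := by
    rw [hc', div_le_one hs0]; exact hs2
  have hc2 : 7/9 < c := by
    rw [hc', lt_div_iff₀ hs0]; nlinarith
  -- arccos (7/9) = π - 2θ
  have hkey : Real.arccos (7/9) = Real.pi - 2 * θ := by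
    have h79 : Real.cos (Real.pi - 2 * θ) = 7/9 := by
      rw [Real.cos_pi_sub, Real.cos_two_mul, hcosθ]; norm_num
    rw [← h79, Real.arccos_cos (by linarith) (by linarith [hθ0])]
  have hmono : Real.arccos c < Real.arccos (7/9) :=
    Real.strictAntiOn_arccos ⟨by norm_num, by norm_num⟩
      ⟨by linarith, hc1⟩ hc2
  have hβlt : β < 2 * Real.pi - 4 * θ := by
    rw [hβ]
    have := hmono
    rw [hkey] at this
    linarith
  rintro ⟨k, hk, hβeq⟩
  have hk4 : (k:ℝ) ≤ 4 := by
    simp only [Set.mem_insert_iff, Set.mem_singleton_iff] at hk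
    rcases hk with rfl | rfl | rfl | rfl <;> norm_num
  have : 2 * Real.pi - 4 * θ ≤ 2 * Real.pi - k * θ := by nlinarith
  linarith [hβeq ▸ hβlt]
end

section
/- Let α = β = 2π − 3·arccos(1/3), a = b = arccos((1+3cos α)/4), α' = β' = arccos((1 − cos a)/(√3 sin a)), and ω = arccos((cos(π/3) − cos a · cos b)/(sin a · sin b)). Then α' + β' + ω ∉ {2π − k·arccos(1/3) : k ∈ {1,2,3,4}}. -/
open Real

theorem stmt_4 (α β a b α' β' ω : ℝ)
    (hα : α = 2 * Real.pi - 3 * Real.arccos (1/3)) (hβ : β = α)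
    (ha : a = Real.arccos ((1 + 3 * Real.cos α) / 4)) (hb : b = a)
    (hα' : α' = Real.arccos ((1 - Real.cos a) / (Real.sqrt 3 * Real.sin a))) (hβ' : β' = α')
    (hω : ω = Real.arccos ((Real.cos (Real.pi/3) - Real.cos a * Real.cos b) /
      (Real.sin a * Real.sin b))) :
    α' + β' + ω ∉
      {x : ℝ | ∃ k ∈ ({1, 2, 3, 4} : Set ℕ), x = 2 * Real.pi - k * Real.arccos (1/3)} := by
  set c := Real.arccos (1/3) with hcdef
  have hcosc : Real.cos c = 1/3 := Real.cos_arccos (by norm_num) (by norm_num)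
  -- cos α = -23/27
  have hcosα : Real.cos α = -23/27 := by
    rw [hα, Real.cos_two_pi_sub, Real.cos_three_mul, hcosc]; norm_num
  -- a = arccos (-7/18)
  have ha' : a = Real.arccos (-7/18) := by
    rw [ha, hcosα]; norm_num
  have hcosa : Real.cos a = -7/18 := by
    rw [ha']; exact Real.cos_arccos (by norm_num) (by norm_num)
  have hsina : Real.sin a = Real.sqrt (275/324) := by
    rw [ha', Real.sin_arccos]; norm_num
  -- the argument of α' equals √(25/33)
  have harg : (1 - Real.cos a) / (Real.sqrt 3 * Real.sin a) = Real.sqrt (25/33) := by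
    rw [hcosa, hsina, ← Real.sqrt_mul (by norm_num : (0:ℝ) ≤ 3)]
    have h1 : (1 - (-7/18) : ℝ) = Real.sqrt (625/324) := by
      rw [show (625/324:ℝ) = (25/18)^2 by norm_num, Real.sqrt_sq (by norm_num)]; norm_num
    rw [h1, ← Real.sqrt_div (by norm_num : (0:ℝ) ≤ 625/324)]
    norm_num
  have hα'' : α' = Real.arccos (Real.sqrt (25/33)) := by rw [hα', harg]
  have hsqle : Real.sqrt (25/33) ≤ 1 := by
    rw [show (1:ℝ) = Real.sqrt 1 by simp]
    exact Real.sqrt_le_sqrt (by norm_num)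
  have hcosα' : Real.cos α' = Real.sqrt (25/33) := by
    rw [hα'']; exact Real.cos_arccos (le_trans (by norm_num) (Real.sqrt_nonneg _)) hsqle
  have hsq25 : Real.sqrt (25/33) ^ 2 = 25/33 := Real.sq_sqrt (by norm_num)
  have hsinα' : Real.sin α' = Real.sqrt (8/33) := by
    rw [hα'', Real.sin_arccos, hsq25]; norm_num
  -- cos ω = 113/275
  have hsina2 : Real.sin a * Real.sin a = 275/324 := by
    rw [hsina]; exact Real.mul_self_sqrt (by norm_num)
  have hω' : ω = Real.arccos (113/275) := by
    rw [hω, hb, hcosa, hsina2, Real.cos_pi_div_three]; norm_num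
  have hcosω : Real.cos ω = 113/275 := by
    rw [hω']; exact Real.cos_arccos (by norm_num) (by norm_num)
  have hsinω : Real.sin ω = Real.sqrt (62856/75625) := by
    rw [hω', Real.sin_arccos]; norm_num
  -- cos and sin of 2α'
  have hcos2α' : Real.cos (α' + α') = 17/33 := by
    rw [Real.cos_add, hcosα', hsinα', ← pow_two, ← pow_two, hsq25,
      Real.sq_sqrt (by norm_num : (0:ℝ) ≤ 8/33)]
    norm_num
  have hprod : Real.sqrt (8/33) * Real.sqrt (25/33) = Real.sqrt (200/1089) := by
    rw [← Real.sqrt_mul (by norm_num : (0:ℝ) ≤ 8/33)]; norm_num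
  have hsin2α' : Real.sin (α' + α') = Real.sqrt (800/1089) := by
    rw [Real.sin_add, hsinα', hcosα', mul_comm (Real.sqrt (25/33)) (Real.sqrt (8/33)), hprod,
      show (800/1089 : ℝ) = 4 * (200/1089) by norm_num,
      Real.sqrt_mul (by norm_num : (0:ℝ) ≤ 4),
      show Real.sqrt 4 = 2 by rw [show (4:ℝ) = 2^2 by norm_num, Real.sqrt_sq (by norm_num)]]
    ring
  -- cos S
  have hcosS : Real.cos (α' + β' + ω) = 1921/9075 - Real.sqrt (50284800/82355625) := by
    rw [hβ', Real.cos_add, hcos2α', hsin2α', hcosω, hsinω,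
      ← Real.sqrt_mul (by norm_num : (0:ℝ) ≤ 800/1089)]
    norm_num
  -- α', ω ∈ [0, π/2]
  have hα'le : α' ≤ Real.pi / 2 := by
    rw [hα'']; exact Real.arccos_le_pi_div_two.2 (by positivity)
  have hα'0 : 0 ≤ α' := by rw [hα'']; exact Real.arccos_nonneg _
  have hω0 : 0 ≤ ω := by rw [hω']; exact Real.arccos_nonneg _
  have hωle : ω ≤ Real.pi := by rw [hω']; exact Real.arccos_le_pi _
  -- S < π
  have hSltπ : α' + β' + ω < Real.pi := by
    have h2α' : α' + α' < Real.pi - ω := by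
      have := Real.strictAntiOn_cos (a := α' + α') (b := Real.pi - ω)
        ⟨by linarith, by linarith⟩ ⟨by linarith, by linarith⟩
      by_contra hcon
      push_neg at hcon
      rcases lt_or_eq_of_le hcon with h | h
      · have := Real.strictAntiOn_cos (a := Real.pi - ω) (b := α' + α')
          ⟨by linarith, by linarith⟩ ⟨by linarith, by linarith⟩ h
        rw [hcos2α', Real.cos_pi_sub, hcosω] at this
        norm_num at this
      · have : Real.cos (α' + α') = Real.cos (Real.pi - ω) := by rw [h]
        rw [hcos2α', Real.cos_pi_sub, hcosω] at this
        norm_num at this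
    linarith [hβ' ▸ h2α']
  -- c < π/2
  have hcltπ2 : c < Real.pi / 2 := Real.arccos_lt_pi_div_two.2 (by norm_num)
  have hπ : 0 < Real.pi := Real.pi_pos
  rintro ⟨k, hk, hEq⟩
  have hV : (0:ℝ) ≤ 50284800/82355625 := by norm_num
  simp only [Set.mem_insert_iff, Set.mem_singleton_iff] at hk
  rcases hk with rfl | rfl | rfl | rfl
  · -- k = 1 : 2π - c > π
    rw [hEq] at hSltπ; push_cast at hSltπ; linarith
  · rw [hEq] at hSltπ; push_cast at hSltπ; linarith
  · -- k = 3 : cosine contradiction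
    have hc : Real.cos (α' + β' + ω) = Real.cos (3 * c) := by
      rw [hEq]; push_cast; rw [Real.cos_two_pi_sub]
    rw [hcosS, Real.cos_three_mul, hcosc] at hc
    have hs : Real.sqrt (50284800/82355625) = 86864/81675 := by linarith
    have := Real.sq_sqrt hV
    rw [hs] at this
    norm_num at this
  · -- k = 4
    have hc : Real.cos (α' + β' + ω) = Real.cos (4 * c) := by
      rw [hEq]; push_cast; rw [Real.cos_two_pi_sub]
    have h4c : Real.cos (4 * c) = 17/81 := by
      rw [show (4:ℝ) * c = 2 * (2 * c) by ring, Real.cos_two_mul, Real.cos_two_mul, hcosc]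
      norm_num
    rw [hcosS, h4c] at hc
    have hs : Real.sqrt (50284800/82355625) = 442/245025 := by linarith
    have := Real.sq_sqrt hV
    rw [hs] at this
    norm_num at this
end

section
/- Let α = β = 2π − 4·arccos(1/3), a = b = arccos((1+3cos α)/4), α' = β' = arccos((1 − cos a)/(√3 sin a)), and ω = arccos((cos(π/3) − cos a · cos b)/(sin a · sin b)). Then α' + β' + ω ∉ {2π − k·arccos(1/3) : k ∈ {1,2,3,4}}. -/
/-!
All the cosines involved are rational, or have rational square: `cos α = 17/81`,
`cos a = 11/27`, `cos² α' = 8/57` and `cos ω = 487/1216`. Hence `α' + β' + ω = 2α' + ω ≈ 3.53`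
lies strictly between `2π - 3 arccos (1/3) ≈ 2.59` and `2π - 2 arccos (1/3) ≈ 3.82`, and the
Taylor bounds `1 - t²/2 ≤ cos t ≤ 1 - t²/2 + t⁴/24` locate each arccos precisely enough to
certify this.
-/

open Real

namespace Real

lemma cos_le_one_sub_sq_div_two_add_pow_four_div (x : ℝ) :
    cos x ≤ 1 - x ^ 2 / 2 + x ^ 4 / 24 := by
  by_cases hx : x ^ 2 ≤ 24
  · set u := |x| / 2 with hu
    have hu0 : 0 ≤ u := by positivity
    have hu2 : u ^ 2 = x ^ 2 / 4 := by rw [hu, div_pow, sq_abs]; ring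
    have hcos : cos x = 1 - 2 * sin u ^ 2 := by
      rw [← cos_abs, show |x| = 2 * u by rw [hu]; ring, cos_two_mul, cos_sq']; ring
    have htaylor : 0 ≤ u - u ^ 3 / 6 := by nlinarith
    have hsin : (u - u ^ 3 / 6) ^ 2 ≤ sin u ^ 2 :=
      pow_le_pow_left₀ htaylor (sin_ge_sub_cube hu0) 2
    rw [show (u - u ^ 3 / 6) ^ 2 = u ^ 2 * (1 - u ^ 2 / 6) ^ 2 by ring, hu2] at hsin
    -- the half-angle bound is the Taylor polynomial minus `x ^ 6 / 1152`
    nlinarith [pow_nonneg (sq_nonneg x) 3]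
  · nlinarith [cos_le_one x]

lemma lt_arccos_of_lt_cos {y t : ℝ} (ht₀ : 0 ≤ t) (htπ : t ≤ π) (hy : -1 ≤ y)
    (h : y < cos t) : t < arccos y := by
  simpa [arccos_cos ht₀ htπ] using arccos_lt_arccos hy h (cos_le_one t)

lemma arccos_lt_of_cos_lt {y t : ℝ} (ht₀ : 0 ≤ t) (htπ : t ≤ π) (hy : y ≤ 1)
    (h : cos t < y) : arccos y < t := by
  simpa [arccos_cos ht₀ htπ] using arccos_lt_arccos (neg_one_le_cos t) h hy

lemma arccos_mem_Ioo_of_taylor {y s t : ℝ} (hs : 0 ≤ s) (hst : s ≤ t) (ht : t ≤ π)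
    (hys : y < 1 - s ^ 2 / 2) (hyt : 1 - t ^ 2 / 2 + t ^ 4 / 24 < y) :
    arccos y ∈ Set.Ioo s t :=
  ⟨lt_arccos_of_lt_cos hs (hst.trans ht) (by nlinarith [sq_nonneg (t ^ 2 - 6)])
    (hys.trans_le one_sub_sq_div_two_le_cos),
   arccos_lt_of_cos_lt (hs.trans hst) ht (by nlinarith)
    ((cos_le_one_sub_sq_div_two_add_pow_four_div t).trans_lt hyt)⟩

lemma cos_four_mul_arccos {x : ℝ} (hx₁ : -1 ≤ x) (hx₂ : x ≤ 1) :
    cos (4 * arccos x) = 8 * x ^ 4 - 8 * x ^ 2 + 1 := by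
  rw [show 4 * arccos x = 2 * (2 * arccos x) by ring, cos_two_mul, cos_two_mul,
    cos_arccos hx₁ hx₂]
  ring

end Real

theorem stmt_5_general (α a b α' β' ω : ℝ)
    (hα : α = 2 * Real.pi - 4 * Real.arccos (1/3))
    (ha : a = Real.arccos ((1 + 3 * Real.cos α) / 4)) (hb : b = a)
    (hα' : α' = Real.arccos ((1 - Real.cos a) / (Real.sqrt 3 * Real.sin a))) (hβ' : β' = α')
    (hω : ω = Real.arccos ((Real.cos (Real.pi/3) - Real.cos a * Real.cos b) /
      (Real.sin a * Real.sin b))) :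
    α' + β' + ω ∉
      {x : ℝ | ∃ k ∈ ({1, 2, 3, 4} : Set ℕ), x = 2 * Real.pi - k * Real.arccos (1/3)} := by
  have hcosα : cos α = 17 / 81 := by
    rw [hα, cos_two_pi_sub, cos_four_mul_arccos (by norm_num) (by norm_num)]; norm_num
  have ha' : a = arccos (11 / 27) := by rw [ha, hcosα]; norm_num
  have hcosa : cos a = 11 / 27 := by rw [ha', cos_arccos (by norm_num) (by norm_num)]
  have hsina : sin a ^ 2 = 608 / 729 := by rw [sin_sq, hcosa]; norm_num
  have hsina_pos : 0 < sin a := by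
    rw [ha']
    exact sin_pos_of_pos_of_lt_pi (arccos_pos.2 (by norm_num)) (arccos_lt_pi.2 (by norm_num))
  have hω' : ω = arccos (487 / 1216) := by
    rw [hω, hb, ← sq, ← sq, hsina, hcosa, cos_pi_div_three]; norm_num
  set y := (1 - cos a) / (√3 * sin a) with hy
  have hy_sq : y ^ 2 = 8 / 57 := by
    rw [hy, div_pow, mul_pow, sq_sqrt (by norm_num), hsina, hcosa]; norm_num
  have hy_pos : 0 < y := by rw [hy, hcosa]; positivity
  have hy_lt : y < 0.375 := lt_of_pow_lt_pow_left₀ 2 (by norm_num) (by rw [hy_sq]; norm_num)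
  have hy_gt : 0.374 < y := lt_of_pow_lt_pow_left₀ 2 hy_pos.le (by rw [hy_sq]; norm_num)
  have hπ := pi_gt_d2
  obtain ⟨hα'_gt, hα'_lt⟩ : α' ∈ Set.Ioo 1.11 1.2 := hα' ▸
    arccos_mem_Ioo_of_taylor (by norm_num) (by norm_num) (by linarith) (by linarith) (by linarith)
  obtain ⟨hω_gt, hω_lt⟩ : ω ∈ Set.Ioo 1.09 1.17 := hω' ▸
    arccos_mem_Ioo_of_taylor (by norm_num) (by norm_num) (by linarith) (by norm_num) (by norm_num)
  obtain ⟨hc_gt, hc_lt⟩ : arccos (1 / 3) ∈ Set.Ioo 1.15 1.24 :=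
    arccos_mem_Ioo_of_taylor (by norm_num) (by norm_num) (by linarith) (by norm_num) (by norm_num)
  rintro ⟨k, hk, hk_eq⟩
  rcases hk with rfl | rfl | rfl | rfl <;> push_cast at hk_eq <;> linarith [pi_lt_d2]

theorem stmt_5 (α β a b α' β' ω : ℝ)
    (hα : α = 2 * Real.pi - 4 * Real.arccos (1/3)) (hβ : β = α)
    (ha : a = Real.arccos ((1 + 3 * Real.cos α) / 4)) (hb : b = a)
    (hα' : α' = Real.arccos ((1 - Real.cos a) / (Real.sqrt 3 * Real.sin a))) (hβ' : β' = α')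
    (hω : ω = Real.arccos ((Real.cos (Real.pi/3) - Real.cos a * Real.cos b) /
      (Real.sin a * Real.sin b))) :
    α' + β' + ω ∉
      {x : ℝ | ∃ k ∈ ({1, 2, 3, 4} : Set ℕ), x = 2 * Real.pi - k * Real.arccos (1/3)} :=
  stmt_5_general α a b α' β' ω hα ha hb hα' hβ' hω
end

section
/- Let α = 2π − 3·arccos(1/3), β = 2π − 4·arccos(1/3), a = arccos((1+3cos α)/4), b = arccos((1+3cos β)/4), α' = arccos((1 − cos a)/(√3 sin a)), β' = arccos((1 − cos b)/(√3 sin b)), ω = arccos((cos(π/3) − cos a cos b)/(sin a sin b)). Then α' + β' + ω ∉ {2π − k·arccos(1/3) : k ∈ {1,2,3,4}}. -/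
/-- Upper Taylor bound for cos on [0,1]. -/
lemma my_cos_ub {x : ℝ} (h0 : 0 ≤ x) (h1 : x ≤ 1) :
    Real.cos x ≤ 1 - x ^ 2 / 2 + x ^ 4 * (5 / 96) := by
  have h := Real.cos_bound (x := x) (by rwa [abs_of_nonneg h0])
  rw [abs_of_nonneg h0] at h
  have h2 := abs_le.mp h
  linarith [h2.2]

/-- Lower Taylor bound for cos on [0,1]. -/
lemma my_cos_lb {x : ℝ} (h0 : 0 ≤ x) (h1 : x ≤ 1) :
    1 - x ^ 2 / 2 - x ^ 4 * (5 / 96) ≤ Real.cos x := by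
  have h := Real.cos_bound (x := x) (by rwa [abs_of_nonneg h0])
  rw [abs_of_nonneg h0] at h
  have h2 := abs_le.mp h
  linarith [h2.1]

lemma my_arccos_lt {s r : ℝ} (hr0 : 0 ≤ r) (hs1 : s ≤ 1)
    (h : Real.cos r < s) : Real.arccos s < r := by
  have hs0 : (-1 : ℝ) ≤ s := le_of_lt (lt_of_le_of_lt (Real.neg_one_le_cos r) h)
  by_contra hc
  push_neg at hc
  rcases eq_or_lt_of_le hc with he | hl
  · rw [he, Real.cos_arccos hs0 hs1] at h
    exact lt_irrefl _ h
  · have h2 := Real.cos_lt_cos_of_nonneg_of_le_pi hr0 (Real.arccos_le_pi s) hl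
    rw [Real.cos_arccos hs0 hs1] at h2
    linarith

lemma my_lt_arccos {s r : ℝ} (hrpi : r ≤ Real.pi) (hs0 : -1 ≤ s)
    (h : s < Real.cos r) : r < Real.arccos s := by
  have hs1 : s ≤ 1 := le_trans h.le (Real.cos_le_one r)
  by_contra hc
  push_neg at hc
  rcases eq_or_lt_of_le hc with he | hl
  · rw [← he, Real.cos_arccos hs0 hs1] at h
    exact lt_irrefl _ h
  · have h2 := Real.cos_lt_cos_of_nonneg_of_le_pi (Real.arccos_nonneg s) hrpi hl
    rw [Real.cos_arccos hs0 hs1] at h2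
    linarith

set_option maxHeartbeats 2000000 in
theorem stmt_6 (α β a b α' β' ω : ℝ)
    (hα : α = 2 * Real.pi - 3 * Real.arccos (1/3))
    (hβ : β = 2 * Real.pi - 4 * Real.arccos (1/3))
    (ha : a = Real.arccos ((1 + 3 * Real.cos α) / 4))
    (hb : b = Real.arccos ((1 + 3 * Real.cos β) / 4))
    (hα' : α' = Real.arccos ((1 - Real.cos a) / (Real.sqrt 3 * Real.sin a)))
    (hβ' : β' = Real.arccos ((1 - Real.cos b) / (Real.sqrt 3 * Real.sin b)))
    (hω : ω = Real.arccos ((Real.cos (Real.pi/3) - Real.cos a * Real.cos b) /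
      (Real.sin a * Real.sin b))) :
    α' + β' + ω ∉
      {x : ℝ | ∃ k ∈ ({1, 2, 3, 4} : Set ℕ), x = 2 * Real.pi - k * Real.arccos (1/3)} := by
  have hθcos : Real.cos (Real.arccos (1/3)) = 1/3 :=
    Real.cos_arccos (by norm_num) (by norm_num)
  -- exact values of cos α and cos β
  have hcosα : Real.cos α = -(23/27) := by
    rw [hα, Real.cos_two_pi_sub, Real.cos_three_mul, hθcos]; norm_num
  have hcosβ : Real.cos β = 17/81 := by
    rw [hβ, Real.cos_two_pi_sub,
      show (4:ℝ) * Real.arccos (1/3) = 2 * (2 * Real.arccos (1/3)) by ring,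
      Real.cos_two_mul, Real.cos_two_mul, hθcos]
    norm_num
  -- exact values of cos/sin of a and b
  have hca : Real.cos a = -(7/18) := by
    rw [ha, hcosα, show (1 + 3 * -(23/27)) / 4 = -(7/18 : ℝ) by norm_num]
    exact Real.cos_arccos (by norm_num) (by norm_num)
  have hcb : Real.cos b = 11/27 := by
    rw [hb, hcosβ, show (1 + 3 * (17/81)) / 4 = (11/27 : ℝ) by norm_num]
    exact Real.cos_arccos (by norm_num) (by norm_num)
  have hsa : Real.sin a = Real.sqrt (275/324) := by
    rw [ha, hcosα, Real.sin_arccos]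
    norm_num
  have hsb : Real.sin b = Real.sqrt (608/729) := by
    rw [hb, hcosβ, Real.sin_arccos]
    norm_num
  -- simplify the three arccos arguments to square roots of rationals
  have harg1 : (1 - Real.cos a) / (Real.sqrt 3 * Real.sin a) = Real.sqrt (25/33) := by
    rw [hca, hsa, ← Real.sqrt_mul (by norm_num : (0:ℝ) ≤ 3),
      show (3:ℝ) * (275/324) = 825/324 by norm_num,
      show (1:ℝ) - -(7/18) = Real.sqrt (625/324) by
        rw [show (625/324:ℝ) = (25/18)^2 by norm_num, Real.sqrt_sq (by norm_num)]
        norm_num,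
      ← Real.sqrt_div (by norm_num),
      show (625/324 : ℝ) / (825/324) = 25/33 by norm_num]
  have harg2 : (1 - Real.cos b) / (Real.sqrt 3 * Real.sin b) = Real.sqrt (8/57) := by
    rw [hcb, hsb, ← Real.sqrt_mul (by norm_num : (0:ℝ) ≤ 3),
      show (3:ℝ) * (608/729) = 1824/729 by norm_num,
      show (1:ℝ) - 11/27 = Real.sqrt (256/729) by
        rw [show (256/729:ℝ) = (16/27)^2 by norm_num, Real.sqrt_sq (by norm_num)]
        norm_num,
      ← Real.sqrt_div (by norm_num),
      show (256/729 : ℝ) / (1824/729) = 8/57 by norm_num]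
  have harg3 : (Real.cos (Real.pi/3) - Real.cos a * Real.cos b) /
      (Real.sin a * Real.sin b) = Real.sqrt (128/209) := by
    rw [Real.cos_pi_div_three, hca, hcb, hsa, hsb,
      ← Real.sqrt_mul (by norm_num : (0:ℝ) ≤ (275/324)),
      show (275/324:ℝ) * (608/729) = 167200/236196 by norm_num,
      show (1/2 : ℝ) - -(7/18) * (11/27) = Real.sqrt (102400/236196) by
        rw [show (102400/236196:ℝ) = (160/243)^2 by norm_num, Real.sqrt_sq (by norm_num)]
        norm_num,
      ← Real.sqrt_div (by norm_num),
      show (102400/236196 : ℝ) / (167200/236196) = 128/209 by norm_num]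
  -- numeric cos bounds
  have c055u : Real.cos (11/20) ≤ 8536/10000 := by
    have h := my_cos_ub (x := 11/20) (by norm_num) (by norm_num); linarith
  have c055l : (8439/10000 : ℝ) ≤ Real.cos (11/20) := by
    have h := my_cos_lb (x := 11/20) (by norm_num) (by norm_num); linarith
  have c04l : (9186/10000 : ℝ) ≤ Real.cos (2/5) := by
    have h := my_cos_lb (x := 2/5) (by norm_num) (by norm_num); linarith
  have c1l : (4479/10000 : ℝ) ≤ Real.cos 1 := by
    have h := my_cos_lb (x := 1) (by norm_num) (by norm_num); linarith
  have c05l : (8717/10000 : ℝ) ≤ Real.cos (1/2) := by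
    have h := my_cos_lb (x := 1/2) (by norm_num) (by norm_num); linarith
  have c071u : Real.cos (71/100) ≤ 7612/10000 := by
    have h := my_cos_ub (x := 71/100) (by norm_num) (by norm_num); linarith
  have c0615u : Real.cos (123/200) ≤ 8184/10000 := by
    have h := my_cos_ub (x := 123/200) (by norm_num) (by norm_num); linarith
  have c0615l : (8034/10000 : ℝ) ≤ Real.cos (123/200) := by
    have h := my_cos_lb (x := 123/200) (by norm_num) (by norm_num); linarith
  have c063u : Real.cos (63/100) ≤ 8098/10000 := by
    have h := my_cos_ub (x := 63/100) (by norm_num) (by norm_num); linarith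
  have c063l : (7933/10000 : ℝ) ≤ Real.cos (63/100) := by
    have h := my_cos_lb (x := 63/100) (by norm_num) (by norm_num); linarith
  -- double-angle derived bounds
  have c123u : Real.cos (123/100) ≤ 3396/10000 := by
    rw [show (123/100:ℝ) = 2 * (123/200) by norm_num, Real.cos_two_mul]
    nlinarith [c0615u, c0615l]
  have c11l : (4243/10000 : ℝ) ≤ Real.cos (11/10) := by
    rw [show (11/10:ℝ) = 2 * (11/20) by norm_num, Real.cos_two_mul]
    nlinarith [c055l]
  have c126u : Real.cos (63/50) ≤ 3116/10000 := by
    rw [show (63/50:ℝ) = 2 * (63/100) by norm_num, Real.cos_two_mul]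
    nlinarith [c063u, c063l]
  have pil := Real.pi_lt_d6
  have pig := Real.pi_gt_d6
  -- bounds on arccos(1/3)
  have hθu : Real.arccos (1/3) < 63/50 :=
    my_arccos_lt (by norm_num) (by norm_num) (by linarith)
  have hθl : (11/10 : ℝ) < Real.arccos (1/3) :=
    my_lt_arccos (by linarith) (by norm_num) (by linarith)
  -- bounds on α', β', ω
  have hα'2 : α' = Real.arccos (Real.sqrt (25/33)) := by rw [hα', harg1]
  have hβ'2 : β' = Real.arccos (Real.sqrt (8/57)) := by rw [hβ', harg2]
  have hω2 : ω = Real.arccos (Real.sqrt (128/209)) := by rw [hω, harg3]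
  have bαu : α' < 11/20 := by
    rw [hα'2]
    exact my_arccos_lt (by norm_num)
      (by rw [show (1:ℝ) = Real.sqrt 1 by simp]; exact Real.sqrt_le_sqrt (by norm_num))
      (lt_of_le_of_lt c055u (Real.lt_sqrt_of_sq_lt (by norm_num)))
  have bαl : (2/5 : ℝ) < α' := by
    rw [hα'2]
    refine my_lt_arccos (by linarith) (le_trans (by norm_num) (Real.sqrt_nonneg _))
      (lt_of_lt_of_le ?_ c04l)
    rw [Real.sqrt_lt' (by norm_num)]; norm_num
  have bβu : β' < 123/100 := by
    rw [hβ'2]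
    exact my_arccos_lt (by norm_num)
      (by rw [show (1:ℝ) = Real.sqrt 1 by simp]; exact Real.sqrt_le_sqrt (by norm_num))
      (lt_of_le_of_lt c123u (Real.lt_sqrt_of_sq_lt (by norm_num)))
  have bβl : (1 : ℝ) < β' := by
    rw [hβ'2]
    refine my_lt_arccos (by linarith) (le_trans (by norm_num) (Real.sqrt_nonneg _))
      (lt_of_lt_of_le ?_ c1l)
    rw [Real.sqrt_lt' (by norm_num)]; norm_num
  have bωu : ω < 71/100 := by
    rw [hω2]
    exact my_arccos_lt (by norm_num)
      (by rw [show (1:ℝ) = Real.sqrt 1 by simp]; exact Real.sqrt_le_sqrt (by norm_num))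
      (lt_of_le_of_lt c071u (Real.lt_sqrt_of_sq_lt (by norm_num)))
  have bωl : (1/2 : ℝ) < ω := by
    rw [hω2]
    refine my_lt_arccos (by linarith) (le_trans (by norm_num) (Real.sqrt_nonneg _))
      (lt_of_lt_of_le ?_ c05l)
    rw [Real.sqrt_lt' (by norm_num)]; norm_num
  -- conclude
  intro hmem
  obtain ⟨k, hk, heq⟩ := hmem
  simp only [Set.mem_insert_iff, Set.mem_singleton_iff] at hk
  rcases hk with rfl | rfl | rfl | rfl <;> push_cast at heq <;> linarith
end

section
/- Let α = β = γ = 2π − 3·arccos(1/3), a = b = c = arccos((1+3cos α)/4), α' = β' = arccos((1 − cos a)/(√3 sin a)), and ω = arccos((cos c − cos a cos b)/(sin a sin b)). Then α' + β' + ω ∉ {2π − k·arccos(1/3) : k ∈ {1,2,3,4}}. -/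
theorem stmt_7 (α β γ a b c α' β' ω : ℝ)
    (hα : α = 2 * Real.pi - 3 * Real.arccos (1/3)) (hβ : β = α) (hγ : γ = α)
    (ha : a = Real.arccos ((1 + 3 * Real.cos α) / 4)) (hb : b = a) (hc : c = a)
    (hα' : α' = Real.arccos ((1 - Real.cos a) / (Real.sqrt 3 * Real.sin a))) (hβ' : β' = α')
    (hω : ω = Real.arccos ((Real.cos c - Real.cos a * Real.cos b) /
      (Real.sin a * Real.sin b))) :
    α' + β' + ω ∉
      {x : ℝ | ∃ k ∈ ({1, 2, 3, 4} : Set ℕ), x = 2 * Real.pi - k * Real.arccos (1/3)} := by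
  set θ := Real.arccos (1/3) with hθ
  have hcosθ : Real.cos θ = 1/3 := Real.cos_arccos (by norm_num) (by norm_num)
  have hcos2θ : Real.cos (2*θ) = -7/9 := by
    rw [Real.cos_two_mul, hcosθ]; norm_num
  have hcos3θ : Real.cos (3*θ) = -23/27 := by
    rw [Real.cos_three_mul, hcosθ]; norm_num
  have hcos4θ : Real.cos (4*θ) = 17/81 := by
    rw [show (4:ℝ)*θ = 2*(2*θ) by ring, Real.cos_two_mul, hcos2θ]; norm_num
  have hcosα : Real.cos α = -23/27 := by
    rw [hα, Real.cos_two_pi_sub, hcos3θ]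
  have hval : (1 + 3 * Real.cos α) / 4 = -7/18 := by rw [hcosα]; norm_num
  have hcosa : Real.cos a = -7/18 := by
    rw [ha, hval]; exact Real.cos_arccos (by norm_num) (by norm_num)
  have hsina : Real.sin a = Real.sqrt (275/324) := by
    rw [ha, hval, Real.sin_arccos]; norm_num
  have hval2 : (1 - Real.cos a) / (Real.sqrt 3 * Real.sin a) = Real.sqrt (25/33) := by
    rw [hcosa, hsina, ← Real.sqrt_mul (by norm_num : (0:ℝ) ≤ 3),
      show (3:ℝ) * (275/324) = 825/324 by norm_num,
      show (1:ℝ) - -7/18 = Real.sqrt (625/324) by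
        rw [show (625/324:ℝ) = (25/18)^2 by norm_num, Real.sqrt_sq (by norm_num)]; norm_num,
      ← Real.sqrt_div (by norm_num : (0:ℝ) ≤ 625/324)]
    norm_num
  have hcosα' : Real.cos α' = Real.sqrt (25/33) := by
    rw [hα', hval2]
    exact Real.cos_arccos (by have := Real.sqrt_nonneg (25/33:ℝ); linarith)
      (by rw [show (1:ℝ) = Real.sqrt 1 by simp]
          exact Real.sqrt_le_sqrt (by norm_num))
  have hsinα' : Real.sin α' = Real.sqrt (8/33) := by
    rw [hα', Real.sin_arccos, hval2, Real.sq_sqrt (by norm_num : (0:ℝ) ≤ 25/33)]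
    norm_num
  have hval3 : (Real.cos c - Real.cos a * Real.cos b) / (Real.sin a * Real.sin b)
      = -7/11 := by
    rw [hb, hc, hcosa, hsina, Real.mul_self_sqrt (by norm_num : (0:ℝ) ≤ 275/324)]
    norm_num
  have hcosω : Real.cos ω = -7/11 := by
    rw [hω, hval3]; exact Real.cos_arccos (by norm_num) (by norm_num)
  have hsinω : Real.sin ω = Real.sqrt (72/121) := by
    rw [hω, hval3, Real.sin_arccos]; norm_num
  have h1 : Real.sqrt (8/33) * Real.sqrt (25/33) * Real.sqrt (72/121) = 120/363 := by
    rw [← Real.sqrt_mul (by norm_num : (0:ℝ) ≤ 8/33),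
      ← Real.sqrt_mul (by norm_num : (0:ℝ) ≤ 8/33 * (25/33)),
      show (8/33 * (25/33) * (72/121) : ℝ) = (120/363)^2 by norm_num,
      Real.sqrt_sq (by norm_num)]
  have hcosS : Real.cos (α' + β' + ω) = -359/363 := by
    rw [hβ', Real.cos_add, Real.cos_add, Real.sin_add, hcosα', hsinα', hcosω, hsinω,
      Real.mul_self_sqrt (by norm_num : (0:ℝ) ≤ 25/33),
      Real.mul_self_sqrt (by norm_num : (0:ℝ) ≤ 8/33)]
    linear_combination (-2 : ℝ) * h1
  rintro ⟨k, hk, hEq⟩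
  have hc' := congrArg Real.cos hEq
  rw [hcosS] at hc'
  simp only [Set.mem_insert_iff, Set.mem_singleton_iff] at hk
  rcases hk with rfl | rfl | rfl | rfl
  · rw [show ((1:ℕ):ℝ) * θ = θ by push_cast; ring, Real.cos_two_pi_sub, hcosθ] at hc'
    norm_num at hc'
  · rw [show ((2:ℕ):ℝ) * θ = 2*θ by push_cast; ring, Real.cos_two_pi_sub, hcos2θ] at hc'
    norm_num at hc'
  · rw [show ((3:ℕ):ℝ) * θ = 3*θ by push_cast; ring, Real.cos_two_pi_sub, hcos3θ] at hc'
    norm_num at hc'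
  · rw [show ((4:ℕ):ℝ) * θ = 4*θ by push_cast; ring, Real.cos_two_pi_sub, hcos4θ] at hc'
    norm_num at hc'
end

section
/- Let α = 2π − 3·arccos(1/3), a = arccos((1+3cos α)/4), γ = arccos((cos(π/3) − cos(π/3)·cos a)/(sin(π/3)·sin a)), θ = 2π − (arccos(1/3) + 2·arccos((1 − cos a)/(√3 sin a)) + γ), and b = arccos(cos a / 2 + (√3/2)·sin a · cos θ). Then b > 2π/3. -/
/-!
The only irrationality that matters is `y = (1 - cos a) / (√3 sin a)`. One computes
`cos α = -23/27`, hence `cos a = -7/18` and `y² = 25/33`. The angle `γ` is also `arccos y`, so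
`θ = 2π - (arccos (1/3) + 3 arccos y)`, and the triple-angle formulas give `cos θ = -59/55 · y`.
Since `√3 sin a · y = 1 - cos a`, the argument of the last `arccos` is
`cos a / 2 - 59/110 · (1 - cos a) = -31/33 < -1/2 = cos (2π/3)`.
-/

open Real

namespace Real

lemma two_pi_div_three_lt_arccos {x : ℝ} (hx : x < -1 / 2) : 2 * π / 3 < arccos x := by
  rcases lt_or_ge x (-1) with hx₁ | hx₁
  · rw [arccos_eq_pi.mpr hx₁.le]
    linarith [pi_pos]
  · have h : arccos (-1 / 2) = 2 * π / 3 := by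
      rw [neg_div, arccos_neg, ← cos_pi_div_three, arccos_cos (by positivity) (by linarith [pi_pos])]
      ring
    exact h ▸ arccos_lt_arccos hx₁ hx (by norm_num)

lemma cos_arccos_add_three_mul_arccos {x y : ℝ} (hx₁ : -1 ≤ x) (hx₂ : x ≤ 1)
    (hy₁ : -1 ≤ y) (hy₂ : y ≤ 1) :
    cos (arccos x + 3 * arccos y) =
      x * (4 * y ^ 3 - 3 * y) - √(1 - x ^ 2) * √(1 - y ^ 2) * (4 * y ^ 2 - 1) := by
  have hsin_sq : √(1 - y ^ 2) ^ 2 = 1 - y ^ 2 := sq_sqrt (by nlinarith)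
  rw [cos_add, cos_three_mul, sin_three_mul, cos_arccos hx₁ hx₂, cos_arccos hy₁ hy₂,
    sin_arccos, sin_arccos]
  linear_combination 4 * √(1 - x ^ 2) * √(1 - y ^ 2) * hsin_sq

end Real

lemma cos_pi_div_three_sub_mul_div (a : ℝ) :
    (cos (π / 3) - cos (π / 3) * cos a) / (sin (π / 3) * sin a) =
      (1 - cos a) / (√3 * sin a) := by
  rw [cos_pi_div_three, sin_pi_div_three, show 1 / 2 - 1 / 2 * cos a = 1 / 2 * (1 - cos a) by ring,
    show √3 / 2 * sin a = 1 / 2 * (√3 * sin a) by ring, mul_div_mul_left _ _ (by norm_num)]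

lemma div_sqrt_three_mul_sin_sq {a : ℝ} (ha : sin a ≠ 0) :
    ((1 - cos a) / (√3 * sin a)) ^ 2 = (1 - cos a) / (3 * (1 + cos a)) := by
  have hsin_sq : sin a ^ 2 = (1 - cos a) * (1 + cos a) := by rw [sin_sq]; ring
  have hprod : (1 - cos a) * (1 + cos a) ≠ 0 := hsin_sq ▸ pow_ne_zero 2 ha
  rw [div_pow, mul_pow, sq_sqrt zero_le_three, hsin_sq, div_eq_div_iff
    (mul_ne_zero three_ne_zero hprod) (mul_ne_zero three_ne_zero (right_ne_zero_of_mul hprod))]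
  ring

lemma cos_two_pi_sub_three_mul_arccos_one_third :
    cos (2 * π - 3 * arccos (1 / 3)) = -23 / 27 := by
  rw [cos_two_pi_sub, cos_three_mul, cos_arccos (by norm_num) (by norm_num)]
  norm_num

lemma cos_two_pi_sub_arccos_one_third_add_three_mul_arccos {y : ℝ} (hy₀ : 0 ≤ y)
    (hy : y ^ 2 = 25 / 33) :
    cos (2 * π - (arccos (1 / 3) + 3 * arccos y)) = -59 / 55 * y := by
  have hy₁ : y ≤ 1 := by nlinarith
  have hsqrt : √(1 - (1 / 3) ^ 2) * √(1 - y ^ 2) = 8 / 15 * y := by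
    rw [← sqrt_mul (by norm_num), hy, ← sqrt_sq (by positivity : 0 ≤ 8 / 15 * y), mul_pow, hy]
    norm_num
  rw [cos_two_pi_sub, cos_arccos_add_three_mul_arccos (by norm_num) (by norm_num) (by linarith) hy₁,
    hsqrt]
  linear_combination (4 / 3 * y - 32 / 15 * y) * hy

theorem stmt_8 (α a γ θ b : ℝ)
    (hα : α = 2 * Real.pi - 3 * Real.arccos (1/3))
    (ha : a = Real.arccos ((1 + 3 * Real.cos α) / 4))
    (hγ : γ = Real.arccos ((Real.cos (Real.pi/3) - Real.cos (Real.pi/3) * Real.cos a) /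
      (Real.sin (Real.pi/3) * Real.sin a)))
    (hθ : θ = 2 * Real.pi - (Real.arccos (1/3) +
      2 * Real.arccos ((1 - Real.cos a) / (Real.sqrt 3 * Real.sin a)) + γ))
    (hb : b = Real.arccos (Real.cos a / 2 + (Real.sqrt 3 / 2) * Real.sin a * Real.cos θ)) :
    b > 2 * Real.pi / 3 := by
  have hcos_a : cos a = -7 / 18 := by
    rw [ha, hα, cos_two_pi_sub_three_mul_arccos_one_third, cos_arccos] <;> norm_num
  have hsin_a : 0 < sin a := by
    rw [ha, hα, cos_two_pi_sub_three_mul_arccos_one_third, sin_arccos]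
    norm_num
  obtain ⟨y, hy⟩ : ∃ y, (1 - cos a) / (√3 * sin a) = y := ⟨_, rfl⟩
  have hy₀ : 0 ≤ y := by rw [← hy, hcos_a]; positivity
  have hy_sq : y ^ 2 = 25 / 33 := by
    rw [← hy, div_sqrt_three_mul_sin_sq hsin_a.ne', hcos_a]; norm_num
  have hy_mul : √3 * sin a * y = 1 - cos a := by
    rw [← hy]; field_simp
  -- `γ` is half the rhombus angle, so `θ = 2π - (arccos (1/3) + 3 arccos y)`.
  have hcos_θ : cos θ = -59 / 55 * y := by
    rw [hθ, hγ, cos_pi_div_three_sub_mul_div, hy, show ∀ u v : ℝ, u + 2 * v + v = u + 3 * v by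
      intros; ring]
    exact cos_two_pi_sub_arccos_one_third_add_three_mul_arccos hy₀ hy_sq
  rw [hb, hcos_θ, gt_iff_lt]
  apply two_pi_div_three_lt_arccos
  linear_combination (-59 / 110) * hy_mul + 57 / 55 * hcos_a
end

section
/- For every integer k ≥ 2, setting n(k) = (2k³ + k)/3, we have N₄(k) := 4(k−2)(k−1)k/3 = 2·n(k) − 4k² + 2k, and N₄(k) > 2·n(k) − 4·(3/2)^{2/3}·n(k)^{2/3} + 2·n(k)^{1/3}. -/
theorem stmt_14 (k : ℕ) (hk : 2 ≤ k) :
    (4 * ((k : ℝ) - 2) * ((k : ℝ) - 1) * k / 3 =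
        2 * ((2 * (k : ℝ) ^ 3 + k) / 3) - 4 * (k : ℝ) ^ 2 + 2 * k) ∧
      4 * ((k : ℝ) - 2) * ((k : ℝ) - 1) * k / 3 >
        2 * ((2 * (k : ℝ) ^ 3 + k) / 3) -
          4 * ((3 : ℝ) / 2) ^ ((2 : ℝ) / 3) * ((2 * (k : ℝ) ^ 3 + k) / 3) ^ ((2 : ℝ) / 3) +
          2 * ((2 * (k : ℝ) ^ 3 + k) / 3) ^ ((1 : ℝ) / 3) := by
  have hk2 : (2 : ℝ) ≤ (k : ℝ) := by exact_mod_cast hk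
  have hkpos : (0 : ℝ) < k := by linarith
  set n : ℝ := (2 * (k : ℝ) ^ 3 + k) / 3 with hn
  have hnpos : 0 < n := by positivity
  refine ⟨by ring, ?_⟩
  -- key: (3/2)^{2/3} n^{2/3} > k^2
  have h1 : (k : ℝ) ^ 3 < (3 / 2) * n := by
    rw [hn]; nlinarith
  have h2 : n < (k : ℝ) ^ 3 := by
    rw [hn]; nlinarith [sq_nonneg ((k:ℝ) - 1), hkpos]
  have hcube : ((k : ℝ) ^ 3) = (k : ℝ) ^ ((3 : ℝ)) := by
    rw [show ((3:ℝ)) = ((3:ℕ):ℝ) by norm_num, Real.rpow_natCast]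
  have hA : ((k : ℝ) ^ 3 : ℝ) ^ ((2:ℝ)/3) = (k : ℝ) ^ 2 := by
    rw [hcube, ← Real.rpow_natCast ((k:ℝ)) 2, ← Real.rpow_mul hkpos.le]
    norm_num
  have hB : ((k : ℝ) ^ 3 : ℝ) ^ ((1:ℝ)/3) = (k : ℝ) := by
    rw [hcube, ← Real.rpow_mul hkpos.le]
    norm_num
  have hsq : (k : ℝ) ^ 2 < (3 / 2 : ℝ) ^ ((2:ℝ)/3) * n ^ ((2:ℝ)/3) := by
    calc (k : ℝ) ^ 2 = ((k : ℝ) ^ 3) ^ ((2:ℝ)/3) := hA.symm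
      _ < ((3/2) * n) ^ ((2:ℝ)/3) := by
          apply Real.rpow_lt_rpow (by positivity) h1 (by norm_num)
      _ = (3 / 2 : ℝ) ^ ((2:ℝ)/3) * n ^ ((2:ℝ)/3) := by
          rw [Real.mul_rpow (by norm_num) hnpos.le]
  have hcbrt : n ^ ((1:ℝ)/3) < (k : ℝ) := by
    calc n ^ ((1:ℝ)/3) < ((k : ℝ) ^ 3) ^ ((1:ℝ)/3) := by
          apply Real.rpow_lt_rpow hnpos.le h2 (by norm_num)
      _ = (k : ℝ) := hB
  nlinarith [hsq, hcbrt]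
end

section
/- For every integer k ≥ 2, setting n(k) = (2k³ + k)/3, we have N₃(k) := (4/3)(k−1)k(4k−5) = 8·n(k) − 12k² + 4k, and N₃(k) > 8·n(k) − 12·(3/2)^{2/3}·n(k)^{2/3} + 4·n(k)^{1/3}. -/
theorem stmt_15 (k : ℕ) (hk : 2 ≤ k) :
    ((4 : ℝ) / 3 * ((k : ℝ) - 1) * k * (4 * k - 5) =
        8 * ((2 * (k : ℝ) ^ 3 + k) / 3) - 12 * (k : ℝ) ^ 2 + 4 * k) ∧
      (4 : ℝ) / 3 * ((k : ℝ) - 1) * k * (4 * k - 5) >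
        8 * ((2 * (k : ℝ) ^ 3 + k) / 3) -
          12 * ((3 : ℝ) / 2) ^ ((2 : ℝ) / 3) * ((2 * (k : ℝ) ^ 3 + k) / 3) ^ ((2 : ℝ) / 3) +
          4 * ((2 * (k : ℝ) ^ 3 + k) / 3) ^ ((1 : ℝ) / 3) := by
  have hk2 : (2 : ℝ) ≤ (k : ℝ) := by exact_mod_cast hk
  set x : ℝ := (k : ℝ) with hx
  have hx0 : (0 : ℝ) < x := by linarith
  set n : ℝ := (2 * x ^ 3 + x) / 3 with hn
  have hn0 : (0 : ℝ) < n := by positivity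
  have hpow3 : (x ^ 3) ^ ((2 : ℝ) / 3) = x ^ 2 := by
    rw [← Real.rpow_natCast x 3, ← Real.rpow_mul hx0.le]
    norm_num
  have hpow1 : (x ^ 3) ^ ((1 : ℝ) / 3) = x := by
    rw [← Real.rpow_natCast x 3, ← Real.rpow_mul hx0.le]
    norm_num
  -- n < x^3
  have hnx : n < x ^ 3 := by
    rw [hn]
    nlinarith [hx0, hk2]
  -- first inequality: 12 * (3/2)^(2/3) * n^(2/3) > 12 x^2
  have h1 : ((3 : ℝ) / 2) ^ ((2 : ℝ) / 3) * n ^ ((2 : ℝ) / 3) > x ^ 2 := by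
    have : ((3 : ℝ) / 2) ^ ((2 : ℝ) / 3) * n ^ ((2 : ℝ) / 3)
        = ((3 : ℝ) / 2 * n) ^ ((2 : ℝ) / 3) := by
      rw [← Real.mul_rpow (by norm_num) hn0.le]
    rw [this, ← hpow3]
    apply Real.rpow_lt_rpow (by positivity) _ (by norm_num)
    rw [hn]
    nlinarith [hx0]
  have h2 : n ^ ((1 : ℝ) / 3) < x := by
    rw [← hpow1]
    exact Real.rpow_lt_rpow hn0.le hnx (by norm_num)
  constructor
  · ring
  · nlinarith [h1, h2]
end
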